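/- (Monotone convergence of the iterative updates) Let X = (X_1,...,X_n) be finite-valued with strictly positive joint pmf p(x), let Y have a fixed finite range, and let α_1,...,α_n ∈ [0,1]. Starting from any strictly positive conditional pmf p^0(y|x), define for each t ≥ 0 the marginals p^t(y) := Σ_x p(x) p^t(y|x) and p^t(y|x_i) := Σ_{x̄ : x̄_i = x_i} p(x̄) p^t(y|x̄)/p(x_i), and the update p^{t+1}(y|x) := (1/Z^{t+1}(x)) p^t(y) Π_{i=1}^n ( p^t(y|x_i)/p^t(y) )^{α_i}, where Z^{t+1}(x) := Σ_y p^t(y) Π_{i=1}^n ( p^t(y|x_i)/p^t(y) )^{α_i}. Let G_t := Σ_{i=1}^n α_i I_t(Y:X_i) − I_t(Y:X), where the information quantities are computed under the joint distribution p(x) p^t(y|x). Then the sequence (G_t) is nondecreasing in t, is bounded above by TC(X), and therefore converges. -/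

import Mathlib

open Finset

/-- Probability that the random variable `f` (on finite sample space `Ω` with pmf `p`)
takes the value `a`. -/
noncomputable def prob {Ω α : Type} [Fintype Ω] [DecidableEq α]
    (p : Ω → ℝ) (f : Ω → α) (a : α) : ℝ :=
  ∑ ω : Ω, if f ω = a then p ω else 0

/-- Shannon entropy (in nats) of the random variable `f`. -/
noncomputable def ent {Ω α : Type} [Fintype Ω] [Fintype α] [DecidableEq α]
    (p : Ω → ℝ) (f : Ω → α) : ℝ :=
  -∑ a : α, prob p f a * Real.log (prob p f a)

/-- Mutual information `I(f : g)`. -/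
noncomputable def mi {Ω α β : Type} [Fintype Ω] [Fintype α] [DecidableEq α]
    [Fintype β] [DecidableEq β] (p : Ω → ℝ) (f : Ω → α) (g : Ω → β) : ℝ :=
  ent p f + ent p g - ent p (fun ω => (f ω, g ω))

/-- Conditional entropy `H(f | g)`. -/
noncomputable def condEnt {Ω α β : Type} [Fintype Ω] [Fintype α] [DecidableEq α]
    [Fintype β] [DecidableEq β] (p : Ω → ℝ) (f : Ω → α) (g : Ω → β) : ℝ :=
  ent p (fun ω => (f ω, g ω)) - ent p g

/-- Conditional mutual information `I(f : g | h)`. -/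
noncomputable def condMI {Ω α β γ : Type} [Fintype Ω] [Fintype α] [DecidableEq α]
    [Fintype β] [DecidableEq β] [Fintype γ] [DecidableEq γ]
    (p : Ω → ℝ) (f : Ω → α) (g : Ω → β) (h : Ω → γ) : ℝ :=
  condEnt p f h + condEnt p g h - condEnt p (fun ω => (f ω, g ω)) h

/-- The joint random variable of a finite family of random variables. -/
def joint {Ω : Type} {n : ℕ} {V : Fin n → Type} (X : ∀ i, Ω → V i) : Ω → (∀ i, V i) :=
  fun ω i => X i ω

/-- Total correlation `TC(X) = ∑ᵢ H(Xᵢ) − H(X)`. -/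
noncomputable def tc {Ω : Type} [Fintype Ω] {n : ℕ} {V : Fin n → Type}
    [∀ i, Fintype (V i)] [∀ i, DecidableEq (V i)]
    (p : Ω → ℝ) (X : ∀ i, Ω → V i) : ℝ :=
  (∑ i, ent p (X i)) - ent p (joint X)

/-- Conditional total correlation `TC(X|g) = ∑ᵢ H(Xᵢ|g) − H(X|g)`. -/
noncomputable def tcCond {Ω : Type} [Fintype Ω] {n : ℕ} {V : Fin n → Type}
    [∀ i, Fintype (V i)] [∀ i, DecidableEq (V i)]
    {β : Type} [Fintype β] [DecidableEq β]
    (p : Ω → ℝ) (X : ∀ i, Ω → V i) (g : Ω → β) : ℝ :=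
  (∑ i, condEnt p (X i) g) - condEnt p (joint X) g

/-- `Y = (Y₁,…,Y_m)` is a representation of (the random variable) `f`:
the `Yⱼ` are conditionally independent given `f`, i.e.
`p(a,y) = p(a) ∏ⱼ p(yⱼ|a)`, written multiplicatively to avoid division:
`p(a)^(m-1) · p(a,y) = ∏ⱼ p(a,yⱼ)`. -/
def IsRepresentation {Ω : Type} [Fintype Ω] {α : Type} [DecidableEq α]
    {m : ℕ} {W : Fin m → Type} [∀ j, DecidableEq (W j)]
    (p : Ω → ℝ) (f : Ω → α) (Y : ∀ j, Ω → W j) : Prop :=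
  ∀ (a : α) (y : ∀ j, W j),
    prob p f a ^ (m - 1) * prob p (fun ω => (f ω, joint Y ω)) (a, y)
      = ∏ j, prob p (fun ω => (f ω, Y j ω)) (a, y j)

/-- `TC_L(X;Y) = ∑ᵢ I(Y:Xᵢ) − ∑ⱼ I(Yⱼ:X)`. -/
noncomputable def tcL {Ω : Type} [Fintype Ω] {n m : ℕ}
    {V : Fin n → Type} [∀ i, Fintype (V i)] [∀ i, DecidableEq (V i)]
    {W : Fin m → Type} [∀ j, Fintype (W j)] [∀ j, DecidableEq (W j)]
    (p : Ω → ℝ) (X : ∀ i, Ω → V i) (Y : ∀ j, Ω → W j) : ℝ :=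
  (∑ i, mi p (joint Y) (X i)) - ∑ j, mi p (Y j) (joint X)

lemma log_sum_ineq {ι : Type*} (s : Finset ι) (a b : ι → ℝ)
    (ha : ∀ i ∈ s, 0 < a i) (hb : ∀ i ∈ s, 0 < b i) :
    (∑ i ∈ s, a i) * (Real.log (∑ i ∈ s, a i) - Real.log (∑ i ∈ s, b i))
      ≤ ∑ i ∈ s, a i * (Real.log (a i) - Real.log (b i)) := by
  rcases s.eq_empty_or_nonempty with rfl | hs
  · simp
  have hA : 0 < ∑ i ∈ s, a i := Finset.sum_pos ha hs
  have hB : 0 < ∑ i ∈ s, b i := Finset.sum_pos hb hs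
  set A := ∑ i ∈ s, a i with hAdef
  set B := ∑ i ∈ s, b i with hBdef
  have key : ∀ i ∈ s, a i * (Real.log (b i) - Real.log (a i) + (Real.log A - Real.log B))
      ≤ b i * (A / B) - a i := by
    intro i hi
    have hpos1 : (0:ℝ) < b i * A := mul_pos (hb i hi) hA
    have hpos2 : (0:ℝ) < a i * B := mul_pos (ha i hi) hB
    have h1 : Real.log (b i) - Real.log (a i) + (Real.log A - Real.log B)
        = Real.log (b i * A / (a i * B)) := by
      rw [Real.log_div (ne_of_gt hpos1) (ne_of_gt hpos2),
        Real.log_mul (ne_of_gt (hb i hi)) (ne_of_gt hA),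
        Real.log_mul (ne_of_gt (ha i hi)) (ne_of_gt hB)]
      ring
    have h2 : Real.log (b i * A / (a i * B)) ≤ b i * A / (a i * B) - 1 :=
      Real.log_le_sub_one_of_pos (div_pos hpos1 hpos2)
    have h3 : a i * (b i * A / (a i * B) - 1) = b i * (A / B) - a i := by
      have hai := (ha i hi).ne'
      have hBne := hB.ne'
      field_simp
    calc a i * (Real.log (b i) - Real.log (a i) + (Real.log A - Real.log B))
        = a i * Real.log (b i * A / (a i * B)) := by rw [h1]
      _ ≤ a i * (b i * A / (a i * B) - 1) := by
          exact mul_le_mul_of_nonneg_left h2 (le_of_lt (ha i hi))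
      _ = b i * (A / B) - a i := h3
  have hsum := Finset.sum_le_sum key
  have hleft : ∑ i ∈ s, a i * (Real.log (b i) - Real.log (a i) + (Real.log A - Real.log B))
      = (∑ i ∈ s, a i * (Real.log (b i) - Real.log (a i))) + A * (Real.log A - Real.log B) := by
    rw [hAdef, Finset.sum_mul]
    rw [← Finset.sum_add_distrib]
    apply Finset.sum_congr rfl
    intro i _; ring
  have hright : ∑ i ∈ s, (b i * (A / B) - a i) = 0 := by
    rw [Finset.sum_sub_distrib, ← Finset.sum_mul]
    rw [← hAdef, ← hBdef]
    field_simp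
    ring
  rw [hleft, hright] at hsum
  have hneg : ∑ i ∈ s, a i * (Real.log (b i) - Real.log (a i))
      = -∑ i ∈ s, a i * (Real.log (a i) - Real.log (b i)) := by
    rw [← Finset.sum_neg_distrib]
    apply Finset.sum_congr rfl
    intro i _; ring
  rw [hneg] at hsum
  linarith

lemma ent_eq_sum {Ω α : Type} [Fintype Ω] [Fintype α] [DecidableEq α]
    (p : Ω → ℝ) (f : Ω → α) :
    ent p f = -∑ ω, p ω * Real.log (prob p f (f ω)) := by
  unfold ent
  congr 1
  calc ∑ a, prob p f a * Real.log (prob p f a)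
      = ∑ a : α, ∑ ω : Ω, (if f ω = a then p ω * Real.log (prob p f a) else 0) := by
        apply Finset.sum_congr rfl
        intro a _
        rw [prob, Finset.sum_mul]
        apply Finset.sum_congr rfl
        intro ω _
        split_ifs <;> simp
    _ = ∑ ω : Ω, ∑ a : α, (if f ω = a then p ω * Real.log (prob p f a) else 0) :=
        Finset.sum_comm
    _ = ∑ ω : Ω, p ω * Real.log (prob p f (f ω)) := by
        apply Finset.sum_congr rfl
        intro ω _
        rw [Finset.sum_ite_eq]
        simp

lemma mi_eq_sum {Ω α β : Type} [Fintype Ω] [Fintype α] [DecidableEq α]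
    [Fintype β] [DecidableEq β] (p : Ω → ℝ) (f : Ω → α) (g : Ω → β) :
    mi p f g = ∑ ω, p ω * (Real.log (prob p (fun ω => (f ω, g ω)) (f ω, g ω))
      - Real.log (prob p f (f ω)) - Real.log (prob p g (g ω))) := by
  unfold mi
  rw [ent_eq_sum, ent_eq_sum, ent_eq_sum]
  rw [← neg_add, ← Finset.sum_add_distrib, sub_neg_eq_add, neg_add_eq_sub,
    ← Finset.sum_sub_distrib]
  apply Finset.sum_congr rfl
  intro ω _; ring

lemma sum_fiber {A C : Type} [Fintype A] [Fintype C] [DecidableEq C]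
    (g : A → C) (f : A → ℝ) :
    ∑ c : C, ∑ x : A, (if g x = c then f x else 0) = ∑ x : A, f x := by
  rw [Finset.sum_comm]
  apply Finset.sum_congr rfl
  intro x _
  rw [Finset.sum_ite_eq]
  simp

lemma prob_snd {A B : Type} [Fintype A] [Fintype B] [DecidableEq B]
    (p : A → ℝ) (u : A → B → ℝ) (y : B) :
    prob (fun z : A × B => p z.1 * u z.1 z.2) (fun z => z.2) y = ∑ x, p x * u x y := by
  rw [prob, Fintype.sum_prod_type]
  apply Finset.sum_congr rfl
  intro x _
  rw [Finset.sum_ite_eq']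
  simp

lemma prob_fst_comp {A B C : Type} [Fintype A] [Fintype B] [Fintype C] [DecidableEq C]
    (p : A → ℝ) (u : A → B → ℝ) (hnorm : ∀ x, ∑ y, u x y = 1) (g : A → C) (c : C) :
    prob (fun z : A × B => p z.1 * u z.1 z.2) (fun z => g z.1) c
      = ∑ x, if g x = c then p x else 0 := by
  rw [prob, Fintype.sum_prod_type]
  apply Finset.sum_congr rfl
  intro x _
  by_cases h : g x = c
  · simp only [h, if_true, ← Finset.mul_sum, hnorm x, mul_one]
  · simp [h]

lemma prob_pair {A B C : Type} [Fintype A] [Fintype B] [Fintype C]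
    [DecidableEq B] [DecidableEq C]
    (p : A → ℝ) (u : A → B → ℝ) (g : A → C) (y : B) (c : C) :
    prob (fun z : A × B => p z.1 * u z.1 z.2) (fun z => (z.2, g z.1)) (y, c)
      = ∑ x, if g x = c then p x * u x y else 0 := by
  rw [prob, Fintype.sum_prod_type]
  apply Finset.sum_congr rfl
  intro x _
  simp only [Prod.mk.injEq, ite_and]
  rw [Finset.sum_ite_eq']
  simp [and_comm]

lemma mi_snd_comp {A B C : Type} [Fintype A] [DecidableEq A] [Fintype B] [DecidableEq B]
    [Fintype C] [DecidableEq C]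
    (p : A → ℝ) (u : A → B → ℝ) (hnorm : ∀ x, ∑ y, u x y = 1) (g : A → C) :
    mi (fun z : A × B => p z.1 * u z.1 z.2) (fun z => z.2) (fun z => g z.1)
      = ∑ x, ∑ y, p x * u x y *
          (Real.log (∑ x', if g x' = g x then p x' * u x' y else 0)
            - Real.log (∑ x', if g x' = g x then p x' else 0)
            - Real.log (∑ x', p x' * u x' y)) := by
  rw [mi_eq_sum, Fintype.sum_prod_type]
  apply Finset.sum_congr rfl
  intro x _
  apply Finset.sum_congr rfl
  intro y _
  rw [prob_snd, prob_fst_comp p u hnorm, prob_pair]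
  ring
/-- Monotone convergence of the iterative updates: starting from any
strictly positive conditional pmf `q 0 = p⁰(y|x)` and iterating
`p^{t+1}(y|x) = (1/Z^{t+1}(x)) pᵗ(y) ∏ᵢ (pᵗ(y|xᵢ)/pᵗ(y))^{αᵢ}` with `αᵢ ∈ [0,1]`,
the objective `G t = ∑ᵢ αᵢ I_t(Y:Xᵢ) − I_t(Y:X)` (computed under the joint `p(x) pᵗ(y|x)`)
is nondecreasing in `t`, bounded above by `TC(X)`, and therefore converges. -/
theorem stmt_18 {n : ℕ} {V : Fin n → Type} [∀ i, Fintype (V i)] [∀ i, DecidableEq (V i)]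
    {𝒴 : Type} [Fintype 𝒴] [DecidableEq 𝒴]
    (p : (∀ i, V i) → ℝ) (hp : ∀ x, 0 < p x) (hp1 : ∑ x, p x = 1)
    (α : Fin n → ℝ) (hα : ∀ i, α i ∈ Set.Icc (0 : ℝ) 1)
    (q : ℕ → (∀ i, V i) → 𝒴 → ℝ)
    (hq0pos : ∀ x y, 0 < q 0 x y) (hq0sum : ∀ x, ∑ y, q 0 x y = 1)
    (pY : ℕ → 𝒴 → ℝ) (hpY : ∀ t y, pY t y = ∑ x, p x * q t x y)
    (pYxi : ℕ → ∀ i, V i → 𝒴 → ℝ)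
    (hpYxi : ∀ t i xi y, pYxi t i xi y
      = (∑ x, if x i = xi then p x * q t x y else 0) / (∑ x, if x i = xi then p x else 0))
    (Z : ℕ → (∀ i, V i) → ℝ)
    (hZ : ∀ t x, Z (t + 1) x = ∑ y, pY t y * ∏ i, (pYxi t i (x i) y / pY t y) ^ α i)
    (hupdate : ∀ t x y, q (t + 1) x y
      = (1 / Z (t + 1) x) * (pY t y * ∏ i, (pYxi t i (x i) y / pY t y) ^ α i))
    (G : ℕ → ℝ)
    (hG : ∀ t, G t
      = (∑ i, α i * mi (fun z : (∀ i, V i) × 𝒴 => p z.1 * q t z.1 z.2)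
            (fun z => z.2) (fun z => z.1 i))
        - mi (fun z : (∀ i, V i) × 𝒴 => p z.1 * q t z.1 z.2)
            (fun z => z.2) (fun z => z.1)) :
    Monotone G
      ∧ (∀ t, G t ≤ tc p (fun i (x : ∀ i, V i) => x i))
      ∧ ∃ L, Filter.Tendsto G Filter.atTop (nhds L) := by
  classical
  have hα0 : ∀ i, 0 ≤ α i := fun i => (hα i).1
  have hα1 : ∀ i, α i ≤ 1 := fun i => (hα i).2
  haveI hXne : Nonempty (∀ i, V i) := by
    by_contra h
    rw [not_nonempty_iff] at h
    rw [Finset.univ_eq_empty, Finset.sum_empty] at hp1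
    exact zero_ne_one hp1
  obtain ⟨x0⟩ := hXne
  haveI : Nonempty (∀ i, V i) := ⟨x0⟩
  haveI hYne : Nonempty 𝒴 := by
    by_contra h
    rw [not_nonempty_iff] at h
    have h1 := hq0sum x0
    rw [Finset.univ_eq_empty, Finset.sum_empty] at h1
    exact zero_ne_one h1
  -- the marginal of `p` on coordinate `i`
  set w : (i : Fin n) → V i → ℝ := fun i xi => ∑ x, if x i = xi then p x else 0 with hwdef
  have hwpos : ∀ i xi, 0 < w i xi := by
    intro i xi
    apply Finset.sum_pos'
    · intro x _
      by_cases h : x i = xi <;> simp [h, (hp x).le]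
    · refine ⟨Function.update x0 i xi, Finset.mem_univ _, ?_⟩
      rw [Function.update_self]
      simp [hp _]
  -- invariants: positivity and normalization of q t
  have hqinv : ∀ t, (∀ x y, 0 < q t x y) ∧ (∀ x, ∑ y, q t x y = 1) := by
    intro t
    induction t with
    | zero => exact ⟨hq0pos, hq0sum⟩
    | succ t ih =>
      obtain ⟨hpos, hnorm⟩ := ih
      have hr : ∀ y, 0 < pY t y := by
        intro y
        rw [hpY]
        exact Finset.sum_pos (fun x _ => mul_pos (hp x) (hpos x y)) Finset.univ_nonempty
      have hs : ∀ i xi y, 0 < pYxi t i xi y := by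
        intro i xi y
        rw [hpYxi]
        apply div_pos ?_ (hwpos i xi)
        apply Finset.sum_pos'
        · intro x _
          by_cases h : x i = xi <;> simp [h, (mul_pos (hp x) (hpos x y)).le]
        · refine ⟨Function.update x0 i xi, Finset.mem_univ _, ?_⟩
          rw [Function.update_self]
          simp [mul_pos (hp _) (hpos _ y)]
      have hterm : ∀ (x : ∀ i, V i) (y : 𝒴), 0 < pY t y * ∏ i, (pYxi t i (x i) y / pY t y) ^ α i := by
        intro x y
        apply mul_pos (hr y)
        apply Finset.prod_pos
        intro i _
        exact Real.rpow_pos_of_pos (div_pos (hs i (x i) y) (hr y)) _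
      have hZpos : ∀ x, 0 < Z (t + 1) x := by
        intro x
        rw [hZ]
        exact Finset.sum_pos (fun y _ => hterm x y) Finset.univ_nonempty
      constructor
      · intro x y
        rw [hupdate]
        exact mul_pos (one_div_pos.mpr (hZpos x)) (hterm x y)
      · intro x
        simp only [hupdate]
        rw [← Finset.mul_sum, ← hZ, one_div, inv_mul_cancel₀ (hZpos x).ne']
  have hqpos : ∀ t x y, 0 < q t x y := fun t => (hqinv t).1
  have hqnorm : ∀ t x, ∑ y, q t x y = 1 := fun t => (hqinv t).2
  have hrpos : ∀ t y, 0 < pY t y := by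
    intro t y
    rw [hpY]
    exact Finset.sum_pos (fun x _ => mul_pos (hp x) (hqpos t x y)) Finset.univ_nonempty
  have hspos : ∀ t i xi y, 0 < pYxi t i xi y := by
    intro t i xi y
    rw [hpYxi]
    apply div_pos ?_ (hwpos i xi)
    apply Finset.sum_pos'
    · intro x _
      by_cases h : x i = xi <;> simp [h, (mul_pos (hp x) (hqpos t x y)).le]
    · refine ⟨Function.update x0 i xi, Finset.mem_univ _, ?_⟩
      rw [Function.update_self]
      simp [mul_pos (hp _) (hqpos t _ y)]
  have hZpos : ∀ t x, 0 < Z (t + 1) x := by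
    intro t x
    rw [hZ]
    apply Finset.sum_pos ?_ Finset.univ_nonempty
    intro y _
    apply mul_pos (hrpos t y)
    exact Finset.prod_pos fun i _ =>
      Real.rpow_pos_of_pos (div_pos (hspos t i (x i) y) (hrpos t y)) _
  have hgroup : ∀ t i xi y,
      (∑ x, if x i = xi then p x * q t x y else 0) = w i xi * pYxi t i xi y := by
    intro t i xi y
    rw [hpYxi, mul_div_cancel₀]
    exact (hwpos i xi).ne'
  have hrnorm : ∀ t, ∑ y, pY t y = 1 := by
    intro t
    simp only [hpY]
    rw [Finset.sum_comm]
    calc ∑ x, ∑ y, p x * q t x y = ∑ x, p x := by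
          apply Finset.sum_congr rfl
          intro x _
          rw [← Finset.mul_sum, hqnorm t x, mul_one]
      _ = 1 := hp1
  have hsnorm : ∀ t i xi, ∑ y, pYxi t i xi y = 1 := by
    intro t i xi
    simp only [hpYxi]
    rw [← Finset.sum_div]
    rw [Finset.sum_comm]
    have : ∑ x, ∑ y, (if x i = xi then p x * q t x y else 0) = w i xi := by
      apply Finset.sum_congr rfl
      intro x _
      by_cases h : x i = xi
      · simp only [h, if_true, ← Finset.mul_sum, hqnorm t x, mul_one]
      · simp [h]
    rw [this, div_self (hwpos i xi).ne']
  have hrfiber : ∀ t i y, pY t y = ∑ xi, w i xi * pYxi t i xi y := by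
    intro t i y
    rw [hpY]
    calc ∑ x, p x * q t x y
        = ∑ xi, ∑ x, (if x i = xi then p x * q t x y else 0) :=
          (sum_fiber (fun x => x i) (fun x => p x * q t x y)).symm
      _ = ∑ xi, w i xi * pYxi t i xi y := by
          apply Finset.sum_congr rfl
          intro xi _
          exact hgroup t i xi y
  -- grouping sums over x according to the value of x i
  have hgroupF : ∀ (t : ℕ) (i : Fin n) (F : V i → 𝒴 → ℝ),
      ∑ x, ∑ y, p x * q t x y * F (x i) y
        = ∑ xi, ∑ y, w i xi * pYxi t i xi y * F xi y := by
    intro t i F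
    rw [Finset.sum_comm]
    conv_rhs => rw [Finset.sum_comm]
    apply Finset.sum_congr rfl
    intro y _
    calc ∑ x, p x * q t x y * F (x i) y
        = ∑ xi, ∑ x, (if x i = xi then p x * q t x y * F (x i) y else 0) :=
          (sum_fiber (fun x => x i) (fun x => p x * q t x y * F (x i) y)).symm
      _ = ∑ xi, (∑ x, if x i = xi then p x * q t x y else 0) * F xi y := by
          apply Finset.sum_congr rfl
          intro xi _
          rw [Finset.sum_mul]
          apply Finset.sum_congr rfl
          intro x _
          by_cases h : x i = xi
          · simp [h]
          · simp [h]
      _ = ∑ xi, w i xi * pYxi t i xi y * F xi y := by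
          apply Finset.sum_congr rfl
          intro xi _
          rw [hgroup t i xi y]
  have hgroupY : ∀ (t : ℕ) (F : 𝒴 → ℝ),
      ∑ x, ∑ y, p x * q t x y * F y = ∑ y, pY t y * F y := by
    intro t F
    rw [Finset.sum_comm]
    apply Finset.sum_congr rfl
    intro y _
    rw [hpY, Finset.sum_mul]
  -- formulas for the mutual informations
  have hmiX : ∀ t, mi (fun z : (∀ i, V i) × 𝒴 => p z.1 * q t z.1 z.2)
      (fun z => z.2) (fun z => z.1)
      = ∑ x, ∑ y, p x * q t x y * (Real.log (q t x y) - Real.log (pY t y)) := by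
    intro t
    have h0 := mi_snd_comp p (q t) (hqnorm t) (fun x => x)
    refine h0.trans ?_
    apply Finset.sum_congr rfl
    intro x _
    apply Finset.sum_congr rfl
    intro y _
    have h1 : (∑ x', if x' = x then p x' * q t x' y else 0) = p x * q t x y := by
      rw [Finset.sum_ite_eq']; simp
    have h2 : (∑ x', if x' = x then p x' else 0) = p x := by
      rw [Finset.sum_ite_eq']; simp
    rw [h1, h2, ← hpY, Real.log_mul (hp x).ne' (hqpos t x y).ne']
    ring
  have hmiXi : ∀ t i, mi (fun z : (∀ i, V i) × 𝒴 => p z.1 * q t z.1 z.2)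
      (fun z => z.2) (fun z => z.1 i)
      = ∑ x, ∑ y, p x * q t x y * (Real.log (pYxi t i (x i) y) - Real.log (pY t y)) := by
    intro t i
    have h0 := mi_snd_comp p (q t) (hqnorm t) (fun x => x i)
    refine h0.trans ?_
    apply Finset.sum_congr rfl
    intro x _
    apply Finset.sum_congr rfl
    intro y _
    rw [hgroup t i (x i) y, ← hpY,
      Real.log_mul (hwpos i (x i)).ne' (hspos t i (x i) y).ne']
    ring
  -- linearity helper
  have hsublin : ∀ (f g : Fin n → ℝ),
      ∑ i, α i * (f i - g i) = (∑ i, α i * f i) - ∑ i, α i * g i := by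
    intro f g
    rw [← Finset.sum_sub_distrib]
    apply Finset.sum_congr rfl
    intro i _
    ring
  -- swap helper
  have hswap : ∀ (F : Fin n → (∀ i, V i) → 𝒴 → ℝ),
      ∑ i, α i * ∑ x, ∑ y, F i x y = ∑ x, ∑ y, ∑ i, α i * F i x y := by
    intro F
    calc ∑ i, α i * ∑ x, ∑ y, F i x y
        = ∑ i, ∑ x, ∑ y, α i * F i x y := by
          apply Finset.sum_congr rfl
          intro i _
          rw [Finset.mul_sum]
          apply Finset.sum_congr rfl
          intro x _
          rw [Finset.mul_sum]
      _ = ∑ x, ∑ i, ∑ y, α i * F i x y := Finset.sum_comm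
      _ = ∑ x, ∑ y, ∑ i, α i * F i x y := by
          apply Finset.sum_congr rfl
          intro x _
          exact Finset.sum_comm
  -- the master formula for G
  have hGf : ∀ t, G t = ∑ x, ∑ y, p x * q t x y *
      ((∑ i, α i * (Real.log (pYxi t i (x i) y) - Real.log (pY t y)))
        - (Real.log (q t x y) - Real.log (pY t y))) := by
    intro t
    rw [hG t, hmiX t]
    have h1 : ∀ i ∈ Finset.univ, α i * mi (fun z : (∀ i, V i) × 𝒴 => p z.1 * q t z.1 z.2)
        (fun z => z.2) (fun z => z.1 i)
        = α i * ∑ x, ∑ y, p x * q t x y *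
            (Real.log (pYxi t i (x i) y) - Real.log (pY t y)) := by
      intro i _
      rw [hmiXi t i]
    rw [Finset.sum_congr rfl h1,
      hswap (fun i x y => p x * q t x y * (Real.log (pYxi t i (x i) y) - Real.log (pY t y))),
      ← Finset.sum_sub_distrib]
    apply Finset.sum_congr rfl
    intro x _
    rw [← Finset.sum_sub_distrib]
    apply Finset.sum_congr rfl
    intro y _
    conv_rhs => rw [mul_sub, Finset.mul_sum]
    congr 1
    apply Finset.sum_congr rfl
    intro i _
    ring
  -- log of the update term
  have hlogterm : ∀ (t : ℕ) (x : ∀ i, V i) (y : 𝒴),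
      Real.log (pY t y * ∏ i, (pYxi t i (x i) y / pY t y) ^ α i)
        = Real.log (pY t y)
          + ∑ i, α i * (Real.log (pYxi t i (x i) y) - Real.log (pY t y)) := by
    intro t x y
    have hprodpos : ∀ i : Fin n, (0:ℝ) < (pYxi t i (x i) y / pY t y) ^ α i := fun i =>
      Real.rpow_pos_of_pos (div_pos (hspos t i (x i) y) (hrpos t y)) _
    rw [Real.log_mul (hrpos t y).ne' (Finset.prod_pos (fun i _ => hprodpos i)).ne',
      Real.log_prod (fun i _ => (hprodpos i).ne')]
    congr 1
    apply Finset.sum_congr rfl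
    intro i _
    rw [Real.log_rpow (div_pos (hspos t i (x i) y) (hrpos t y)),
      Real.log_div (hspos t i (x i) y).ne' (hrpos t y).ne']
  have hstep1 : ∀ t, G t ≤ ∑ x, p x * Real.log (Z (t + 1) x) := by
    intro t
    rw [hGf t]
    apply Finset.sum_le_sum
    intro x _
    have hZq : ∀ y, Z (t + 1) x * q (t + 1) x y
        = pY t y * ∏ i, (pYxi t i (x i) y / pY t y) ^ α i := by
      intro y
      rw [hupdate t x y, ← mul_assoc, mul_one_div, div_self (hZpos t x).ne', one_mul]
    have hEy : ∀ y, (∑ i, α i * (Real.log (pYxi t i (x i) y) - Real.log (pY t y)))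
        - (Real.log (q t x y) - Real.log (pY t y))
        = Real.log (Z (t + 1) x * q (t + 1) x y) - Real.log (q t x y) := by
      intro y
      rw [hZq y, hlogterm t x y]
      ring
    have hinner : ∑ y, q t x y * (Real.log (Z (t + 1) x * q (t + 1) x y)
        - Real.log (q t x y)) ≤ Real.log (Z (t + 1) x) := by
      have key := log_sum_ineq Finset.univ (fun y => q t x y)
        (fun y => Z (t + 1) x * q (t + 1) x y)
        (fun y _ => hqpos t x y)
        (fun y _ => mul_pos (hZpos t x) (hqpos (t + 1) x y))
      have hsb : ∑ y, Z (t + 1) x * q (t + 1) x y = Z (t + 1) x := by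
        rw [← Finset.mul_sum, hqnorm (t + 1) x, mul_one]
      rw [hqnorm t x, hsb, Real.log_one, one_mul] at key
      have hneg : ∑ y, q t x y * (Real.log (Z (t + 1) x * q (t + 1) x y)
          - Real.log (q t x y))
          = -∑ y, q t x y * (Real.log (q t x y)
              - Real.log (Z (t + 1) x * q (t + 1) x y)) := by
        rw [← Finset.sum_neg_distrib]
        apply Finset.sum_congr rfl
        intro y _
        ring
      rw [hneg]
      linarith
    calc ∑ y, p x * q t x y *
          ((∑ i, α i * (Real.log (pYxi t i (x i) y) - Real.log (pY t y)))
            - (Real.log (q t x y) - Real.log (pY t y)))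
        = p x * ∑ y, q t x y * (Real.log (Z (t + 1) x * q (t + 1) x y)
            - Real.log (q t x y)) := by
          rw [Finset.mul_sum]
          apply Finset.sum_congr rfl
          intro y _
          rw [hEy y]
          ring
      _ ≤ p x * Real.log (Z (t + 1) x) :=
          mul_le_mul_of_nonneg_left hinner (hp x).le
  have hstep2 : ∀ t, (∑ x, p x * Real.log (Z (t + 1) x)) ≤ G (t + 1) := by
    intro t
    -- log of the update
    have hlq : ∀ (x : ∀ i, V i) (y : 𝒴), Real.log (q (t + 1) x y)
        = Real.log (pY t y)
          + (∑ i, α i * (Real.log (pYxi t i (x i) y) - Real.log (pY t y)))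
          - Real.log (Z (t + 1) x) := by
      intro x y
      have hprodpos : (0:ℝ) < pY t y * ∏ i, (pYxi t i (x i) y / pY t y) ^ α i :=
        mul_pos (hrpos t y) (Finset.prod_pos fun i _ =>
          Real.rpow_pos_of_pos (div_pos (hspos t i (x i) y) (hrpos t y)) _)
      rw [hupdate t x y, Real.log_mul (one_div_pos.mpr (hZpos t x)).ne' hprodpos.ne',
        hlogterm t x y, one_div, Real.log_inv]
      ring
    -- pointwise expansion of the bracket at time t+1
    have hbr : ∀ (x : ∀ i, V i) (y : 𝒴),
        (∑ i, α i * (Real.log (pYxi (t + 1) i (x i) y) - Real.log (pY (t + 1) y)))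
          - (Real.log (q (t + 1) x y) - Real.log (pY (t + 1) y))
        = (∑ i, α i * ((Real.log (pYxi (t + 1) i (x i) y) - Real.log (pYxi t i (x i) y))
              - (Real.log (pY (t + 1) y) - Real.log (pY t y))))
          + ((Real.log (pY (t + 1) y) - Real.log (pY t y)) + Real.log (Z (t + 1) x)) := by
      intro x y
      rw [hlq x y]
      simp only [mul_sub, Finset.sum_sub_distrib]
      ring
    -- nonnegativity of the marginal KL term
    have hT0nn : 0 ≤ ∑ y, pY (t + 1) y * (Real.log (pY (t + 1) y) - Real.log (pY t y)) := by
      have key := log_sum_ineq Finset.univ (fun y => pY (t + 1) y) (fun y => pY t y)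
        (fun y _ => hrpos (t + 1) y) (fun y _ => hrpos t y)
      rw [hrnorm (t + 1), hrnorm t, Real.log_one] at key
      simpa using key
    have hT0 : ∑ x, ∑ y, p x * q (t + 1) x y *
        (Real.log (pY (t + 1) y) - Real.log (pY t y))
        = ∑ y, pY (t + 1) y * (Real.log (pY (t + 1) y) - Real.log (pY t y)) :=
      hgroupY (t + 1) _
    -- each coordinate KL term dominates the marginal one
    have hTi : ∀ i : Fin n,
        ∑ y, pY (t + 1) y * (Real.log (pY (t + 1) y) - Real.log (pY t y))
          ≤ ∑ x, ∑ y, p x * q (t + 1) x y *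
              (Real.log (pYxi (t + 1) i (x i) y) - Real.log (pYxi t i (x i) y)) := by
      intro i
      rw [hgroupF (t + 1) i
        (fun xi y => Real.log (pYxi (t + 1) i xi y) - Real.log (pYxi t i xi y)),
        Finset.sum_comm]
      apply Finset.sum_le_sum
      intro y _
      have key := log_sum_ineq Finset.univ (fun xi => w i xi * pYxi (t + 1) i xi y)
        (fun xi => w i xi * pYxi t i xi y)
        (fun xi _ => mul_pos (hwpos i xi) (hspos (t + 1) i xi y))
        (fun xi _ => mul_pos (hwpos i xi) (hspos t i xi y))
      rw [← hrfiber (t + 1) i y, ← hrfiber t i y] at key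
      have heq : ∑ xi, (w i xi * pYxi (t + 1) i xi y) *
          (Real.log (w i xi * pYxi (t + 1) i xi y) - Real.log (w i xi * pYxi t i xi y))
          = ∑ xi, w i xi * pYxi (t + 1) i xi y *
              (Real.log (pYxi (t + 1) i xi y) - Real.log (pYxi t i xi y)) := by
        apply Finset.sum_congr rfl
        intro xi _
        rw [Real.log_mul (hwpos i xi).ne' (hspos (t + 1) i xi y).ne',
          Real.log_mul (hwpos i xi).ne' (hspos t i xi y).ne']
        ring
      rw [heq] at key
      exact key
    -- split G (t+1) into three pieces
    have hsplit : G (t + 1)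
        = (∑ i, α i * ∑ x, ∑ y, p x * q (t + 1) x y *
            ((Real.log (pYxi (t + 1) i (x i) y) - Real.log (pYxi t i (x i) y))
              - (Real.log (pY (t + 1) y) - Real.log (pY t y))))
          + ((∑ x, ∑ y, p x * q (t + 1) x y *
              (Real.log (pY (t + 1) y) - Real.log (pY t y)))
            + ∑ x, p x * Real.log (Z (t + 1) x)) := by
      rw [hGf (t + 1)]
      rw [hswap (fun i x y => p x * q (t + 1) x y *
        ((Real.log (pYxi (t + 1) i (x i) y) - Real.log (pYxi t i (x i) y))
          - (Real.log (pY (t + 1) y) - Real.log (pY t y))))]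
      have hzc : ∀ x : ∀ i, V i, ∑ y, p x * q (t + 1) x y * Real.log (Z (t + 1) x)
          = p x * Real.log (Z (t + 1) x) := by
        intro x
        calc ∑ y, p x * q (t + 1) x y * Real.log (Z (t + 1) x)
            = (p x * Real.log (Z (t + 1) x)) * ∑ y, q (t + 1) x y := by
              rw [Finset.mul_sum]
              apply Finset.sum_congr rfl
              intro y _
              ring
          _ = p x * Real.log (Z (t + 1) x) := by rw [hqnorm (t + 1) x, mul_one]
      conv_rhs =>
        rw [show ∑ x, p x * Real.log (Z (t + 1) x)
            = ∑ x, ∑ y, p x * q (t + 1) x y * Real.log (Z (t + 1) x) from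
          (Finset.sum_congr rfl fun x _ => hzc x).symm]
      rw [← Finset.sum_add_distrib, ← Finset.sum_add_distrib]
      apply Finset.sum_congr rfl
      intro x _
      rw [← Finset.sum_add_distrib, ← Finset.sum_add_distrib]
      apply Finset.sum_congr rfl
      intro y _
      rw [hbr x y, mul_add, Finset.mul_sum]
      congr 1
      · apply Finset.sum_congr rfl
        intro i _
        ring
      · ring
    rw [hsplit]
    have hmain : 0 ≤ ∑ i, α i * ∑ x, ∑ y, p x * q (t + 1) x y *
        ((Real.log (pYxi (t + 1) i (x i) y) - Real.log (pYxi t i (x i) y))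
          - (Real.log (pY (t + 1) y) - Real.log (pY t y))) := by
      apply Finset.sum_nonneg
      intro i _
      apply mul_nonneg (hα0 i)
      have hdist : ∑ x, ∑ y, p x * q (t + 1) x y *
          ((Real.log (pYxi (t + 1) i (x i) y) - Real.log (pYxi t i (x i) y))
            - (Real.log (pY (t + 1) y) - Real.log (pY t y)))
          = (∑ x, ∑ y, p x * q (t + 1) x y *
              (Real.log (pYxi (t + 1) i (x i) y) - Real.log (pYxi t i (x i) y)))
            - ∑ x, ∑ y, p x * q (t + 1) x y *
                (Real.log (pY (t + 1) y) - Real.log (pY t y)) := by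
        rw [← Finset.sum_sub_distrib]
        apply Finset.sum_congr rfl
        intro x _
        rw [← Finset.sum_sub_distrib]
        apply Finset.sum_congr rfl
        intro y _
        ring
      rw [hdist, hT0]
      have := hTi i
      linarith
    rw [hT0] at *
    linarith
  -- computation of tc
  have hprob_id : ∀ x₀ : ∀ i, V i, prob p (fun x => x) x₀ = p x₀ := by
    intro x₀
    rw [prob, Finset.sum_ite_eq']
    simp
  have hprob_proj : ∀ (i : Fin n) (xi : V i), prob p (fun x => x i) xi = w i xi := by
    intro i xi
    rfl
  have hTC : tc p (fun i (x : ∀ i, V i) => x i)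
      = ∑ x, p x * (Real.log (p x) - ∑ i, Real.log (w i (x i))) := by
    have htc0 : tc p (fun i (x : ∀ i, V i) => x i)
        = (∑ i, ent p (fun x : ∀ i, V i => x i)) - ent p (fun x : ∀ i, V i => x) := rfl
    rw [htc0, ent_eq_sum p (fun x : ∀ i, V i => x)]
    have h1 : ∀ i ∈ Finset.univ, ent p (fun x : ∀ i, V i => x i)
        = -∑ x, p x * Real.log (w i (x i)) := by
      intro i _
      rw [ent_eq_sum]
      rfl
    rw [Finset.sum_congr rfl h1]
    have h2 : ∀ x ∈ Finset.univ, p x * Real.log (prob p (fun x : ∀ i, V i => x) x)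
        = p x * Real.log (p x) := by
      intro x _
      rw [hprob_id x]
    rw [Finset.sum_congr rfl h2, Finset.sum_neg_distrib, Finset.sum_comm,
      sub_neg_eq_add, neg_add_eq_sub, ← Finset.sum_sub_distrib]
    apply Finset.sum_congr rfl
    intro x _
    conv_rhs => rw [mul_sub, Finset.mul_sum]
  -- nonnegativity of the coordinate mutual informations
  have hIinn : ∀ t i, 0 ≤ ∑ x, ∑ y, p x * q t x y *
      (Real.log (pYxi t i (x i) y) - Real.log (pY t y)) := by
    intro t i
    rw [hgroupF t i (fun xi y => Real.log (pYxi t i xi y) - Real.log (pY t y))]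
    apply Finset.sum_nonneg
    intro xi _
    have key := log_sum_ineq Finset.univ (fun y => w i xi * pYxi t i xi y)
      (fun y => w i xi * pY t y)
      (fun y _ => mul_pos (hwpos i xi) (hspos t i xi y))
      (fun y _ => mul_pos (hwpos i xi) (hrpos t y))
    have ha : ∑ y, w i xi * pYxi t i xi y = w i xi := by
      rw [← Finset.mul_sum, hsnorm t i xi, mul_one]
    have hb : ∑ y, w i xi * pY t y = w i xi := by
      rw [← Finset.mul_sum, hrnorm t, mul_one]
    rw [ha, hb, sub_self, mul_zero] at key
    have heq : ∑ y, (w i xi * pYxi t i xi y) *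
        (Real.log (w i xi * pYxi t i xi y) - Real.log (w i xi * pY t y))
        = ∑ y, w i xi * pYxi t i xi y *
            (Real.log (pYxi t i xi y) - Real.log (pY t y)) := by
      apply Finset.sum_congr rfl
      intro y _
      rw [Real.log_mul (hwpos i xi).ne' (hspos t i xi y).ne',
        Real.log_mul (hwpos i xi).ne' (hrpos t y).ne']
      ring
    rw [heq] at key
    exact key
  -- G t is at most the unweighted difference
  have hGle : ∀ t, G t ≤ (∑ i, ∑ x, ∑ y, p x * q t x y *
      (Real.log (pYxi t i (x i) y) - Real.log (pY t y)))
      - ∑ x, ∑ y, p x * q t x y * (Real.log (q t x y) - Real.log (pY t y)) := by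
    intro t
    rw [hG t, hmiX t]
    apply sub_le_sub_right
    have h1 : ∀ i ∈ Finset.univ, α i * mi (fun z : (∀ i, V i) × 𝒴 => p z.1 * q t z.1 z.2)
        (fun z => z.2) (fun z => z.1 i)
        = α i * ∑ x, ∑ y, p x * q t x y *
            (Real.log (pYxi t i (x i) y) - Real.log (pY t y)) := by
      intro i _
      rw [hmiXi t i]
    rw [Finset.sum_congr rfl h1]
    apply Finset.sum_le_sum
    intro i _
    exact mul_le_of_le_one_left (hIinn t i) (hα1 i)
  -- swap helper without weights
  have hswap1 : ∀ (F : Fin n → (∀ i, V i) → 𝒴 → ℝ),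
      ∑ i, ∑ x, ∑ y, F i x y = ∑ x, ∑ y, ∑ i, F i x y := by
    intro F
    rw [Finset.sum_comm]
    apply Finset.sum_congr rfl
    intro x _
    exact Finset.sum_comm
  -- the conditional total correlation term
  have hbound : ∀ t, G t ≤ tc p (fun i (x : ∀ i, V i) => x i) := by
    intro t
    have hKnn : 0 ≤ ∑ x, ∑ y, p x * q t x y *
        (Real.log (p x * q t x y)
          - Real.log (pY t y * ∏ i, (w i (x i) * pYxi t i (x i) y / pY t y))) := by
      rw [Finset.sum_comm]
      apply Finset.sum_nonneg
      intro y _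
      have hbpos : ∀ x : ∀ i, V i,
          0 < pY t y * ∏ i, (w i (x i) * pYxi t i (x i) y / pY t y) := by
        intro x
        exact mul_pos (hrpos t y) (Finset.prod_pos fun i _ =>
          div_pos (mul_pos (hwpos i (x i)) (hspos t i (x i) y)) (hrpos t y))
      have key := log_sum_ineq Finset.univ (fun x : ∀ i, V i => p x * q t x y)
        (fun x : ∀ i, V i => pY t y * ∏ i, (w i (x i) * pYxi t i (x i) y / pY t y))
        (fun x _ => mul_pos (hp x) (hqpos t x y)) (fun x _ => hbpos x)
      have hsa : ∑ x, p x * q t x y = pY t y := (hpY t y).symm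
      have hsb : ∑ x : ∀ i, V i, pY t y * ∏ i, (w i (x i) * pYxi t i (x i) y / pY t y)
          = pY t y := by
        rw [← Finset.mul_sum]
        rw [show (∑ x : ∀ i, V i, ∏ i, (w i (x i) * pYxi t i (x i) y / pY t y))
            = ∏ i, ∑ xi, w i xi * pYxi t i xi y / pY t y from
          (Fintype.prod_sum fun i xi => w i xi * pYxi t i xi y / pY t y).symm]
        have h1 : ∀ i ∈ Finset.univ, (∑ xi, w i xi * pYxi t i xi y / pY t y) = 1 := by
          intro i _
          rw [← Finset.sum_div, ← hrfiber t i y, div_self (hrpos t y).ne']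
        rw [Finset.prod_congr rfl h1, Finset.prod_const_one, mul_one]
      rw [hsa, hsb, sub_self, mul_zero] at key
      exact key
    have hident : (∑ i, ∑ x, ∑ y, p x * q t x y *
        (Real.log (pYxi t i (x i) y) - Real.log (pY t y)))
        - (∑ x, ∑ y, p x * q t x y * (Real.log (q t x y) - Real.log (pY t y)))
        + (∑ x, ∑ y, p x * q t x y *
            (Real.log (p x * q t x y)
              - Real.log (pY t y * ∏ i, (w i (x i) * pYxi t i (x i) y / pY t y))))
        = tc p (fun i (x : ∀ i, V i) => x i) := by
      rw [hTC]
      rw [hswap1 (fun i x y => p x * q t x y *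
        (Real.log (pYxi t i (x i) y) - Real.log (pY t y)))]
      have htarget : ∀ x ∈ Finset.univ,
          p x * (Real.log (p x) - ∑ i, Real.log (w i (x i)))
          = ∑ y, p x * q t x y * (Real.log (p x) - ∑ i, Real.log (w i (x i))) := by
        intro x _
        calc p x * (Real.log (p x) - ∑ i, Real.log (w i (x i)))
            = (p x * (Real.log (p x) - ∑ i, Real.log (w i (x i)))) * ∑ y, q t x y := by
              rw [hqnorm t x, mul_one]
          _ = ∑ y, p x * q t x y * (Real.log (p x) - ∑ i, Real.log (w i (x i))) := by
              rw [Finset.mul_sum]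
              apply Finset.sum_congr rfl
              intro y _
              ring
      rw [Finset.sum_congr rfl htarget]
      rw [← Finset.sum_sub_distrib, ← Finset.sum_add_distrib]
      apply Finset.sum_congr rfl
      intro x _
      rw [← Finset.sum_sub_distrib, ← Finset.sum_add_distrib]
      apply Finset.sum_congr rfl
      intro y _
      have hlogb : Real.log (pY t y * ∏ i, (w i (x i) * pYxi t i (x i) y / pY t y))
          = Real.log (pY t y) + ∑ i, (Real.log (w i (x i)) + Real.log (pYxi t i (x i) y)
              - Real.log (pY t y)) := by
        have hfpos : ∀ i : Fin n, (0:ℝ) < w i (x i) * pYxi t i (x i) y / pY t y := fun i =>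
          div_pos (mul_pos (hwpos i (x i)) (hspos t i (x i) y)) (hrpos t y)
        rw [Real.log_mul (hrpos t y).ne' (Finset.prod_pos fun i _ => hfpos i).ne',
          Real.log_prod (fun i _ => (hfpos i).ne')]
        congr 1
        apply Finset.sum_congr rfl
        intro i _
        rw [Real.log_div (mul_pos (hwpos i (x i)) (hspos t i (x i) y)).ne' (hrpos t y).ne',
          Real.log_mul (hwpos i (x i)).ne' (hspos t i (x i) y).ne']
      have hlogpq : Real.log (p x * q t x y) = Real.log (p x) + Real.log (q t x y) :=
        Real.log_mul (hp x).ne' (hqpos t x y).ne'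
      have hE : (∑ i, (Real.log (pYxi t i (x i) y) - Real.log (pY t y)))
          - (Real.log (q t x y) - Real.log (pY t y))
          + (Real.log (p x * q t x y)
              - Real.log (pY t y * ∏ i, (w i (x i) * pYxi t i (x i) y / pY t y)))
          = Real.log (p x) - ∑ i, Real.log (w i (x i)) := by
        rw [hlogb, hlogpq]
        simp only [Finset.sum_sub_distrib, Finset.sum_add_distrib]
        ring
      calc (∑ i, p x * q t x y * (Real.log (pYxi t i (x i) y) - Real.log (pY t y)))
            - p x * q t x y * (Real.log (q t x y) - Real.log (pY t y))
            + p x * q t x y * (Real.log (p x * q t x y)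
                - Real.log (pY t y * ∏ i, (w i (x i) * pYxi t i (x i) y / pY t y)))
          = p x * q t x y * ((∑ i, (Real.log (pYxi t i (x i) y) - Real.log (pY t y)))
              - (Real.log (q t x y) - Real.log (pY t y))
              + (Real.log (p x * q t x y)
                - Real.log (pY t y * ∏ i, (w i (x i) * pYxi t i (x i) y / pY t y)))) := by
            conv_rhs => rw [mul_add, mul_sub, Finset.mul_sum]
        _ = p x * q t x y * (Real.log (p x) - ∑ i, Real.log (w i (x i))) := by rw [hE]
    have := hGle t
    linarith
  -- conclusion
  have hmono : Monotone G := monotone_nat_of_le_succ fun t => (hstep1 t).trans (hstep2 t)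
  refine ⟨hmono, hbound, ⟨⨆ t, G t, ?_⟩⟩
  apply tendsto_atTop_ciSup hmono
  refine ⟨tc p (fun i (x : ∀ i, V i) => x i), ?_⟩
  rintro v ⟨t, rfl⟩
  exact hbound t
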